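/- arXiv:1708.04753 — 4 statements merged into one kernel-verified Lean document; each statement's English description precedes it below -/
import Mathlib

section
/- For every α > 1/2 and α₀ > 0 there exists a constant C > 0 depending only on α, α₀, C_ψ, c₁, c₂ such that for every λ ∈ (0,1] and every f* ∈ Θ_H^{α₀}(B): ‖P_λ f*‖_∞ ≤ C B λ^{min(α₀, 2α)/(2α)}; in particular, sup_{x ≥ 1} λ x^{−α₀}/(λ + x^{−2α}) ≤ C' λ^{min(α₀,2α)/(2α)} for a constant C' depending only on α, α₀. -/
open MeasureTheory ProbabilityTheory Real Set

noncomputable section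

/-- The uniform probability measure on `[0,1]`. -/
def unifMeasure : Measure ℝ := volume.restrict (Icc (0:ℝ) 1)

/-- The supremum norm of a function over `[0,1]`. -/
def supNorm01 (f : ℝ → ℝ) : ℝ := ⨆ x : Icc (0:ℝ) 1, |f x.1|

/-- The function `x ↦ ∑_j c_j ψ_j(x)`. -/
def seriesFun (ψ : ℕ → ℝ → ℝ) (c : ℕ → ℝ) (x : ℝ) : ℝ := ∑' j : ℕ, c j * ψ j x

/-- The equivalent kernel. -/
def eqKer (ψ : ℕ → ℝ → ℝ) (μs : ℕ → ℝ) (lam : ℝ) (s t : ℝ) : ℝ :=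
  ∑' j : ℕ, (μs j / (μs j + lam)) * (ψ j s * ψ j t)

/-- The covariance kernel `K`. -/
def origKer (ψ : ℕ → ℝ → ℝ) (μs : ℕ → ℝ) (s t : ℝ) : ℝ :=
  ∑' j : ℕ, μs j * (ψ j s * ψ j t)

/-- Coefficients of `P_λ f`. -/
def PlamCoef (μs : ℕ → ℝ) (lam : ℝ) (c : ℕ → ℝ) : ℕ → ℝ :=
  fun j => (lam / (μs j + lam)) * c j

/-- Coefficients of `F_λ f`. -/
def FlamCoef (μs : ℕ → ℝ) (lam : ℝ) (c : ℕ → ℝ) : ℕ → ℝ :=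
  fun j => (μs j / (μs j + lam)) * c j

/-- Membership in the RKHS `H`. -/
def InRKHS (μs : ℕ → ℝ) (c : ℕ → ℝ) : Prop := Summable fun j : ℕ => c j ^ 2 / μs j

/-- The squared RKHS norm. -/
def rkhsNormSq (μs : ℕ → ℝ) (c : ℕ → ℝ) : ℝ := ∑' j : ℕ, c j ^ 2 / μs j

/-- The KRR objective. -/
def krrObj (ψ : ℕ → ℝ → ℝ) (μs : ℕ → ℝ) (lam : ℝ) {n : ℕ}
    (X Y : Fin n → ℝ) (c : ℕ → ℝ) : ℝ :=
  (1 / (n : ℝ)) * ∑ i, (Y i - seriesFun ψ c (X i)) ^ 2 + lam * rkhsNormSq μs c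

/-- `c` is a minimizer of the KRR objective over `H`. -/
def IsKRRMin (ψ : ℕ → ℝ → ℝ) (μs : ℕ → ℝ) (lam : ℝ) {n : ℕ}
    (X Y : Fin n → ℝ) (c : ℕ → ℝ) : Prop :=
  InRKHS μs c ∧ ∀ g : ℕ → ℝ, InRKHS μs g → krrObj ψ μs lam X Y c ≤ krrObj ψ μs lam X Y g

/-- Joint law of design and noise. -/
def dataMeasure (n : ℕ) (σ : ℝ) : Measure ((Fin n → ℝ) × (Fin n → ℝ)) :=
  (Measure.pi fun _ : Fin n => unifMeasure).prod
    (Measure.pi fun _ : Fin n => gaussianReal 0 (Real.toNNReal (σ ^ 2)))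

/-- Law of the design alone. -/
def designMeasure (n : ℕ) : Measure (Fin n → ℝ) := Measure.pi fun _ : Fin n => unifMeasure

/-- The quantity `γ_n`. -/
def gammaN (α : ℝ) (n : ℕ) (h : ℝ) : ℝ :=
  max 1 ((n : ℝ) ^ (-1 + 1/(2*α)) * h ^ (-(1/(2*α))) * Real.sqrt (Real.log (n:ℝ))) *
    Real.sqrt (Real.log (n:ℝ) / ((n : ℝ) * h))

/-- Kernel matrix `K(X,X)`. -/
def kerMatrix (ψ : ℕ → ℝ → ℝ) (μs : ℕ → ℝ) {n : ℕ} (X : Fin n → ℝ) :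
    Matrix (Fin n) (Fin n) ℝ :=
  Matrix.of fun i j => origKer ψ μs (X i) (X j)

/-- Posterior mean function. -/
def postMean (ψ : ℕ → ℝ → ℝ) (μs : ℕ → ℝ) (lam : ℝ) {n : ℕ}
    (X Y : Fin n → ℝ) (x : ℝ) : ℝ :=
  ∑ i, ∑ j,
    origKer ψ μs x (X i) *
      (kerMatrix ψ μs X + ((n : ℝ) * lam) • (1 : Matrix (Fin n) (Fin n) ℝ))⁻¹ i j * Y j

/-- Posterior variance function. -/
def postVar (ψ : ℕ → ℝ → ℝ) (μs : ℕ → ℝ) (lam σ : ℝ) {n : ℕ}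
    (X : Fin n → ℝ) (x : ℝ) : ℝ :=
  σ ^ 2 / ((n : ℝ) * lam) *
    (origKer ψ μs x x -
      ∑ i, ∑ j,
        origKer ψ μs x (X i) *
          (kerMatrix ψ μs X + ((n : ℝ) * lam) • (1 : Matrix (Fin n) (Fin n) ℝ))⁻¹ i j *
            origKer ψ μs (X j) x)

/-- `Ĉ_n^B(x,x)`. -/
def ChatBDiag (α : ℝ) (ψ : ℕ → ℝ → ℝ) (μs : ℕ → ℝ) (σ h : ℝ) (x : ℝ) : ℝ :=
  σ ^ 2 * h * ∑' j : ℕ, (μs j / (μs j + h ^ (2*α))) * (ψ j x) ^ 2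

/-- `Ĉ_n(x,x)`. -/
def ChatDiag (α : ℝ) (ψ : ℕ → ℝ → ℝ) (μs : ℕ → ℝ) (σ h : ℝ) (x : ℝ) : ℝ :=
  σ ^ 2 * h * ∑' j : ℕ, (ψ j x) ^ 2 / (1 + h ^ (2*α) / μs j) ^ 2

/-- Standard normal CDF `Φ`. -/
def stdNormalCDF (z : ℝ) : ℝ := (gaussianReal 0 1 (Iic z)).toReal

/-- A centered Gaussian random vector law with covariance matrix `C`. -/
def IsCenteredGaussianVec {N : ℕ} (μm : Measure (Fin N → ℝ))
    (C : Matrix (Fin N) (Fin N) ℝ) : Prop :=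
  IsProbabilityMeasure μm ∧
    ∀ a : Fin N → ℝ,
      μm.map (fun w => ∑ i, a i * w i) =
        gaussianReal 0 (Real.toNNReal (∑ i, ∑ j, a i * a j * C i j))

lemma core_ineq {α α₀ lam x : ℝ} (hα : 1/2 < α) (hα₀ : 0 < α₀)
    (hl0 : 0 < lam) (hx : 1 ≤ x) :
    lam * x ^ (-α₀) ≤ lam ^ (min α₀ (2*α) / (2*α)) * (lam + x ^ (-(2*α))) := by
  have hα2 : (0:ℝ) < 2*α := by linarith
  have hx0 : (0:ℝ) < x := by linarith
  set r := min α₀ (2*α) / (2*α) with hrdef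
  have hr0 : 0 ≤ r := div_nonneg (le_min hα₀.le hα2.le) hα2.le
  have hr1 : r ≤ 1 := by
    rw [hrdef, div_le_one hα2]; exact min_le_right _ _
  have hxneg : (0:ℝ) < x ^ (-(2*α)) := Real.rpow_pos_of_pos hx0 _
  rcases le_total α₀ (2*α) with h | h
  · have hrval : r = α₀/(2*α) := by rw [hrdef, min_eq_left h]
    rcases le_total lam (x ^ (-(2*α))) with hcase | hcase
    · have h1 : lam = lam ^ r * lam ^ (1 - r) := by
        rw [← Real.rpow_add hl0]; norm_num
      have h2 : lam ^ (1-r) ≤ (x ^ (-(2*α))) ^ (1-r) :=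
        Real.rpow_le_rpow hl0.le hcase (by linarith)
      have h3 : (x ^ (-(2*α))) ^ (1-r) = x ^ (-(2*α) * (1-r)) :=
        (Real.rpow_mul hx0.le _ _).symm
      have h4 : -(2*α) * (1-r) + (-α₀) = -(2*α) := by
        rw [hrval]; field_simp; ring
      calc lam * x ^ (-α₀) = lam ^ r * lam ^ (1-r) * x ^ (-α₀) := by rw [← h1]
        _ ≤ lam ^ r * (x ^ (-(2*α) * (1-r))) * x ^ (-α₀) := by
            have := Real.rpow_pos_of_pos hl0 r
            have hxn : (0:ℝ) ≤ x ^ (-α₀) := (Real.rpow_pos_of_pos hx0 _).le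
            rw [← h3]
            exact mul_le_mul_of_nonneg_right
              (mul_le_mul_of_nonneg_left h2 this.le) hxn
        _ = lam ^ r * x ^ (-(2*α)) := by
            rw [mul_assoc, ← Real.rpow_add hx0, h4]
        _ ≤ lam ^ r * (lam + x ^ (-(2*α))) := by
            have := Real.rpow_pos_of_pos hl0 r
            nlinarith
    · have hxval : x ^ (-α₀) = (x ^ (-(2*α))) ^ r := by
        rw [← Real.rpow_mul hx0.le, hrval]
        congr 1; field_simp
      have h2 : (x ^ (-(2*α))) ^ r ≤ lam ^ r :=
        Real.rpow_le_rpow hxneg.le hcase hr0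
      calc lam * x ^ (-α₀) = lam * (x ^ (-(2*α))) ^ r := by rw [hxval]
        _ ≤ lam * lam ^ r := by nlinarith
        _ = lam ^ r * lam := by ring
        _ ≤ lam ^ r * (lam + x ^ (-(2*α))) := by
            have := Real.rpow_pos_of_pos hl0 r
            nlinarith
  · have hrval : r = 1 := by rw [hrdef, min_eq_right h]; field_simp
    have h1 : x ^ (-α₀) ≤ x ^ (-(2*α)) :=
      Real.rpow_le_rpow_of_exponent_le hx (by linarith)
    rw [hrval, Real.rpow_one]
    nlinarith

/-- sup-norm bias bound for the Hölder class. -/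
theorem statement12 (α α₀ Cψ c₁ c₂ : ℝ) (hα : 1/2 < α) (hα₀ : 0 < α₀)
    (hCψ : 0 < Cψ) (hc₁ : 0 < c₁) (hc₂ : 0 < c₂) :
    ∃ C > (0:ℝ), ∃ C' > (0:ℝ),
      (∀ ψ : ℕ → ℝ → ℝ, ∀ μs : ℕ → ℝ,
        (∀ j : ℕ, ∀ t ∈ Icc (0:ℝ) 1, |ψ j t| ≤ Cψ) →
        (∀ j : ℕ, 0 < μs j) →
        (∀ j : ℕ, c₁ * ((j:ℝ) + 1) ^ (-(2*α)) ≤ μs j) →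
        (∀ j : ℕ, μs j ≤ c₂ * ((j:ℝ) + 1) ^ (-(2*α))) →
        ∀ lam : ℝ, lam ∈ Ioc (0:ℝ) 1 → ∀ B : ℝ, 0 < B → ∀ fstar : ℕ → ℝ,
          Summable (fun j : ℕ => ((j:ℝ) + 1) ^ α₀ * |fstar j|) →
          (∑' j : ℕ, ((j:ℝ) + 1) ^ α₀ * |fstar j|) ≤ B →
          supNorm01 (seriesFun ψ (PlamCoef μs lam fstar)) ≤
            C * B * lam ^ (min α₀ (2*α) / (2*α))) ∧
      (∀ lam : ℝ, lam ∈ Ioc (0:ℝ) 1 → ∀ x : ℝ, 1 ≤ x →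
        lam * x ^ (-α₀) / (lam + x ^ (-(2*α))) ≤ C' * lam ^ (min α₀ (2*α) / (2*α))) := by
  set m := min c₁ 1 with hmdef
  have hm0 : 0 < m := lt_min hc₁ one_pos
  have hm1 : m ≤ 1 := min_le_right _ _
  set r := min α₀ (2*α) / (2*α) with hrdef
  refine ⟨Cψ / m, div_pos hCψ hm0, 1, one_pos, ?_, ?_⟩
  · intro ψ μs hψ hμpos hμlo _hμhi lam hlam B hB fstar hsum hsumB
    have hl0 : 0 < lam := hlam.1
    have hlr : 0 < lam ^ r := Real.rpow_pos_of_pos hl0 r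
    -- key coefficient bound
    have hcoef : ∀ j : ℕ, lam / (μs j + lam) ≤ (1/m) * lam ^ r * ((j:ℝ)+1) ^ α₀ := by
      intro j
      have hj1 : (1:ℝ) ≤ (j:ℝ) + 1 := by have := Nat.cast_nonneg (α := ℝ) j; linarith
      have hj0 : (0:ℝ) < (j:ℝ) + 1 := by positivity
      have hden : 0 < μs j + lam := by linarith [hμpos j]
      rw [div_le_iff₀ hden]
      have hcore := core_ineq hα hα₀ hl0 hj1
      have hlow : m * (lam + ((j:ℝ)+1) ^ (-(2*α))) ≤ μs j + lam := by
        have h1 : m * ((j:ℝ)+1) ^ (-(2*α)) ≤ μs j := by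
          refine le_trans ?_ (hμlo j)
          have : (0:ℝ) ≤ ((j:ℝ)+1) ^ (-(2*α)) := (Real.rpow_pos_of_pos hj0 _).le
          nlinarith [min_le_left c₁ (1:ℝ)]
        nlinarith
      have hpow : ((j:ℝ)+1) ^ α₀ * ((j:ℝ)+1) ^ (-α₀) = 1 := by
        rw [← Real.rpow_add hj0]; norm_num
      have h2 : lam ≤ lam ^ r * ((j:ℝ)+1) ^ α₀ * (lam + ((j:ℝ)+1) ^ (-(2*α))) := by
        calc lam = ((j:ℝ)+1) ^ α₀ * (lam * ((j:ℝ)+1) ^ (-α₀)) := by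
              rw [show ((j:ℝ)+1) ^ α₀ * (lam * ((j:ℝ)+1) ^ (-α₀)) =
                (((j:ℝ)+1) ^ α₀ * ((j:ℝ)+1) ^ (-α₀)) * lam by ring, hpow, one_mul]
          _ ≤ ((j:ℝ)+1) ^ α₀ * (lam ^ r * (lam + ((j:ℝ)+1) ^ (-(2*α)))) := by
              have : (0:ℝ) ≤ ((j:ℝ)+1) ^ α₀ := (Real.rpow_pos_of_pos hj0 _).le
              exact mul_le_mul_of_nonneg_left hcore this
          _ = lam ^ r * ((j:ℝ)+1) ^ α₀ * (lam + ((j:ℝ)+1) ^ (-(2*α))) := by ring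
      calc lam ≤ lam ^ r * ((j:ℝ)+1) ^ α₀ * (lam + ((j:ℝ)+1) ^ (-(2*α))) := h2
        _ = (1/m) * lam ^ r * ((j:ℝ)+1) ^ α₀ * (m * (lam + ((j:ℝ)+1) ^ (-(2*α)))) := by
            field_simp
        _ ≤ (1/m) * lam ^ r * ((j:ℝ)+1) ^ α₀ * (μs j + lam) := by
            have hp : (0:ℝ) ≤ (1/m) * lam ^ r * ((j:ℝ)+1) ^ α₀ := by positivity
            exact mul_le_mul_of_nonneg_left hlow hp
    -- supremum bound
    have hbound : ∀ x : Icc (0:ℝ) 1,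
        |seriesFun ψ (PlamCoef μs lam fstar) x.1| ≤ Cψ / m * B * lam ^ r := by
      intro x
      set g : ℕ → ℝ := fun j => (Cψ / m * lam ^ r) * (((j:ℝ)+1) ^ α₀ * |fstar j|) with hgdef
      have hgsum : Summable g := hsum.mul_left _
      have hterm : ∀ j : ℕ, |PlamCoef μs lam fstar j * ψ j x.1| ≤ g j := by
        intro j
        have hden : 0 < μs j + lam := by linarith [hμpos j, hl0]
        have hc0 : 0 ≤ lam / (μs j + lam) := by positivity
        rw [abs_mul, PlamCoef, abs_mul, abs_of_nonneg hc0]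
        have hψx := hψ j x.1 x.2
        have hψ0 : 0 ≤ |ψ j x.1| := abs_nonneg _
        calc lam / (μs j + lam) * |fstar j| * |ψ j x.1|
            ≤ ((1/m) * lam ^ r * ((j:ℝ)+1) ^ α₀) * |fstar j| * Cψ := by
              have hj0 : (0:ℝ) < (j:ℝ) + 1 := by positivity
              have h1 : lam / (μs j + lam) * |fstar j| ≤
                  ((1/m) * lam ^ r * ((j:ℝ)+1) ^ α₀) * |fstar j| :=
                mul_le_mul_of_nonneg_right (hcoef j) (abs_nonneg _)
              have h2 : 0 ≤ ((1/m) * lam ^ r * ((j:ℝ)+1) ^ α₀) * |fstar j| := by positivity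
              calc lam / (μs j + lam) * |fstar j| * |ψ j x.1|
                  ≤ ((1/m) * lam ^ r * ((j:ℝ)+1) ^ α₀) * |fstar j| * |ψ j x.1| :=
                    mul_le_mul_of_nonneg_right h1 hψ0
                _ ≤ ((1/m) * lam ^ r * ((j:ℝ)+1) ^ α₀) * |fstar j| * Cψ :=
                    mul_le_mul_of_nonneg_left hψx h2
          _ = g j := by rw [hgdef]; ring
      have habs : Summable fun j => |PlamCoef μs lam fstar j * ψ j x.1| :=
        Summable.of_nonneg_of_le (fun j => abs_nonneg _) hterm hgsum
      have hsum2 : Summable fun j => PlamCoef μs lam fstar j * ψ j x.1 :=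
        habs.of_abs
      calc |seriesFun ψ (PlamCoef μs lam fstar) x.1|
          ≤ ∑' j : ℕ, |PlamCoef μs lam fstar j * ψ j x.1| := by
            rw [seriesFun]
            simp only [← Real.norm_eq_abs] at habs ⊢
            exact norm_tsum_le_tsum_norm habs
        _ ≤ ∑' j : ℕ, g j := Summable.tsum_le_tsum hterm habs hgsum
        _ = (Cψ / m * lam ^ r) * ∑' j : ℕ, ((j:ℝ)+1) ^ α₀ * |fstar j| := tsum_mul_left
        _ ≤ (Cψ / m * lam ^ r) * B := by
            have : (0:ℝ) ≤ Cψ / m * lam ^ r := by positivity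
            exact mul_le_mul_of_nonneg_left hsumB this
        _ = Cψ / m * B * lam ^ r := by ring
    exact ciSup_le hbound
  · intro lam hlam x hx
    have hl0 : 0 < lam := hlam.1
    have hden : 0 < lam + x ^ (-(2*α)) := by
      have : (0:ℝ) < x ^ (-(2*α)) := Real.rpow_pos_of_pos (by linarith) _
      linarith
    rw [div_le_iff₀ hden, one_mul]
    exact core_ineq hα hα₀ hl0 hx
end
end

section
/- For every α > 1/2 there exists a constant C > 0 depending only on α, C_ψ, c₁, c₂ such that for every λ ∈ (0,1] and every f* ∈ Θ_S^α(B): ‖P_λ f*‖_∞ ≤ C B λ^{1/2 − 1/(4α)}. -/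
open MeasureTheory ProbabilityTheory Real Set

noncomputable section

lemma key_rpow (p x : ℝ) (hp : 0 < p) (hx : 1 ≤ x) :
    p * (x+1) ^ (-p-1) ≤ x ^ (-p) - (x+1) ^ (-p) := by
  have hx0 : (0:ℝ) < x := by linarith
  have hy0 : (0:ℝ) < x + 1 := by linarith
  set t : ℝ := 1/(x+1) with ht
  have ht0 : 0 < t := by positivity
  have ht1 : t < 1 := by
    rw [ht, div_lt_one hy0]; linarith
  have h1t : 0 < 1 - t := by linarith
  have hexp1 : (1-t)^p ≤ Real.exp (-(p*t)) := by
    rw [Real.rpow_def_of_pos h1t]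
    apply Real.exp_le_exp.2
    have := Real.log_le_sub_one_of_pos h1t
    nlinarith
  have hexp2 : 1 + p*t ≤ Real.exp (p*t) := by
    have := Real.add_one_le_exp (p*t); linarith
  have hkey : (1 + p*t) * (1-t)^p ≤ 1 := by
    calc (1+p*t)*(1-t)^p ≤ Real.exp (p*t) * Real.exp (-(p*t)) := by
          apply mul_le_mul hexp2 hexp1 (by positivity) (by positivity)
      _ = 1 := by rw [← Real.exp_add, add_neg_cancel, Real.exp_zero]
  have hpos : (0:ℝ) < (1-t)^p := Real.rpow_pos_of_pos h1t p
  have hinv : 1 + p*t ≤ (1-t)^(-p) := by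
    rw [Real.rpow_neg h1t.le, ← one_div]
    exact (le_div_iff₀ hpos).2 hkey
  have hxeq : (x+1)*(1-t) = x := by
    rw [ht]; field_simp; ring
  have hxp : x ^ (-p) = (x+1)^(-p) * (1-t)^(-p) := by
    conv_lhs => rw [← hxeq]
    exact Real.mul_rpow hy0.le h1t.le
  have h2 : (x+1)^(-p-1) = (x+1)^(-p) * t := by
    rw [show -p-1 = -p + (-1) by ring, Real.rpow_add hy0, Real.rpow_neg_one, ht, one_div]
  have hq : (0:ℝ) < (x+1)^(-p) := Real.rpow_pos_of_pos hy0 _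
  rw [hxp, h2]
  nlinarith [mul_le_mul_of_nonneg_left hinv hq.le]

lemma tail_sum_bound (p : ℝ) (hp : 1 < p) (J : ℕ) (hJ : 1 ≤ J) (n : ℕ) :
    ∑ k ∈ Finset.range n, ((J:ℝ)+k+1)^(-p) ≤ (J:ℝ)^(1-p) / (p-1) := by
  have hp1 : 0 < p - 1 := by linarith
  have hJ1 : (1:ℝ) ≤ (J:ℝ) := by exact_mod_cast hJ
  set g : ℕ → ℝ := fun k => ((J:ℝ)+k)^(1-p) with hg
  have step : ∀ k:ℕ, (p-1) * ((J:ℝ)+k+1)^(-p) ≤ g k - g (k+1) := by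
    intro k
    have hxk : (1:ℝ) ≤ (J:ℝ)+k := by
      have : (0:ℝ) ≤ (k:ℝ) := Nat.cast_nonneg k
      linarith
    have h := key_rpow (p-1) ((J:ℝ)+k) hp1 hxk
    have e1 : -(p-1)-1 = -p := by ring
    have e2 : -(p-1) = 1-p := by ring
    rw [e1, e2] at h
    have e3 : g (k+1) = (((J:ℝ)+k)+1)^(1-p) := by
      simp only [hg]; push_cast; ring_nf
    rw [e3, hg]
    convert h using 3 <;> ring
  have hsum : (p-1) * ∑ k ∈ Finset.range n, ((J:ℝ)+k+1)^(-p) ≤ (J:ℝ)^(1-p) := by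
    rw [Finset.mul_sum]
    have h1 : ∑ k ∈ Finset.range n, (p-1) * ((J:ℝ)+k+1)^(-p)
        ≤ ∑ k ∈ Finset.range n, (g k - g (k+1)) :=
      Finset.sum_le_sum (fun k _ => step k)
    rw [Finset.sum_range_sub' g n] at h1
    have h2 : 0 ≤ g n := Real.rpow_nonneg (by positivity) _
    have h3 : g 0 = (J:ℝ)^(1-p) := by simp [hg]
    linarith
  rw [le_div_iff₀ hp1]
  linarith [hsum]


lemma u_summable (α : ℝ) (hα : 1/2 < α) :
    Summable (fun j:ℕ => ((j:ℝ)+1)^(-(2*α))) := by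
  have h0 : Summable (fun n:ℕ => (n:ℝ)^(-(2*α))) :=
    Real.summable_nat_rpow.2 (by linarith)
  have h1 := (summable_nat_add_iff 1).2 h0
  exact h1.congr (fun n => by push_cast; ring_nf)

lemma S_bound (α c₁ : ℝ) (hα : 1/2 < α) (hc₁ : 0 < c₁) (μs : ℕ → ℝ)
    (hμpos : ∀ j : ℕ, 0 < μs j) (hμlo : ∀ j : ℕ, c₁ * ((j:ℝ)+1)^(-(2*α)) ≤ μs j)
    (lam : ℝ) (hlam0 : 0 < lam) (hlam1 : lam ≤ 1) :
    Summable (fun j:ℕ => (lam/(μs j+lam))^2 * ((j:ℝ)+1)^(-(2*α))) ∧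
    ∑' j:ℕ, (lam/(μs j+lam))^2 * ((j:ℝ)+1)^(-(2*α)) ≤
      ((2:ℝ)^(2*α+1)/c₁^2 + 1/(2*α-1)) * lam^(1-1/(2*α)) := by
  have hα0 : (0:ℝ) < α := by linarith
  have hαne : α ≠ 0 := ne_of_gt hα0
  have hα2 : (1:ℝ) < 2*α := by linarith
  set t : ℕ → ℝ := fun j => (lam/(μs j+lam))^2 * ((j:ℝ)+1)^(-(2*α)) with htdef
  set u : ℕ → ℝ := fun j => ((j:ℝ)+1)^(-(2*α)) with hudef
  have hu0 : ∀ j, 0 ≤ u j := fun j => Real.rpow_nonneg (by positivity) _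
  have ht0 : ∀ j, 0 ≤ t j := fun j => by
    have := hu0 j; simp only [htdef]; positivity
  have htu : ∀ j, t j ≤ u j := by
    intro j
    have hμ := hμpos j
    have hfr : lam/(μs j+lam) ≤ 1 := by
      rw [div_le_one (by linarith)]; linarith
    have hfr0 : 0 ≤ lam/(μs j+lam) := by positivity
    have h1 : (lam/(μs j+lam))^2 ≤ 1 := by nlinarith
    have := mul_le_mul_of_nonneg_right h1 (hu0 j)
    simpa [htdef, hudef] using this
  have husum : Summable u := u_summable α hα
  have htsum : Summable t := Summable.of_nonneg_of_le ht0 htu husum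
  refine ⟨htsum, ?_⟩
  set r : ℝ := lam ^ (-(1/(2*α))) with hrdef
  have hr1 : (1:ℝ) ≤ r :=
    Real.one_le_rpow_of_pos_of_le_one_of_nonpos hlam0 hlam1
      (neg_nonpos.2 (by positivity))
  have hr0 : (0:ℝ) < r := by linarith
  set J : ℕ := ⌈r⌉₊ with hJdef
  have hJ1 : 1 ≤ J := Nat.one_le_ceil_iff.2 (by linarith)
  have hrJ : r ≤ (J:ℝ) := Nat.le_ceil r
  have hJr : (J:ℝ) ≤ 2*r := by
    have h := Nat.ceil_lt_add_one (le_of_lt hr0)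
    have h' : (J:ℝ) < r + 1 := h
    linarith
  have hJ0 : (0:ℝ) < (J:ℝ) := by
    have : (1:ℝ) ≤ (J:ℝ) := by exact_mod_cast hJ1
    linarith
  -- head term bound
  have hhead : ∀ j:ℕ, t j ≤ lam^2 * ((j:ℝ)+1)^(2*α) / c₁^2 := by
    intro j
    have hw0 : (0:ℝ) < (j:ℝ)+1 := by positivity
    set A : ℝ := ((j:ℝ)+1)^(2*α) with hAdef
    have hA0 : 0 < A := Real.rpow_pos_of_pos hw0 _
    have hwneg : ((j:ℝ)+1)^(-(2*α)) = A⁻¹ := Real.rpow_neg hw0.le _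
    have hμ := hμpos j
    have hlo := hμlo j
    rw [hwneg] at hlo
    have hfrac : lam/(μs j + lam) ≤ lam * A / c₁ := by
      rw [div_le_div_iff₀ (by linarith) hc₁]
      have h1 : c₁ ≤ μs j * A := by
        have h2 := mul_le_mul_of_nonneg_right hlo hA0.le
        rw [mul_assoc, inv_mul_cancel₀ (ne_of_gt hA0), mul_one] at h2
        linarith
      nlinarith [mul_le_mul_of_nonneg_left h1 hlam0.le,
        mul_nonneg (mul_nonneg hlam0.le hA0.le) hlam0.le]
    have hfr0 : 0 ≤ lam/(μs j+lam) := by positivity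
    have h2 : (lam/(μs j+lam))^2 ≤ (lam*A/c₁)^2 := by nlinarith
    have h3 : t j = (lam/(μs j+lam))^2 * A⁻¹ := by
      simp only [htdef, hwneg]
    rw [h3]
    have h4 : (lam*A/c₁)^2 * A⁻¹ = lam^2 * A / c₁^2 := by
      field_simp
    calc (lam/(μs j+lam))^2 * A⁻¹ ≤ (lam*A/c₁)^2 * A⁻¹ :=
          mul_le_mul_of_nonneg_right h2 (by positivity)
      _ = lam^2 * A / c₁^2 := h4
  -- head sum
  have hlamrpow : lam^2 * r^(2*α+1) = lam^(1-1/(2*α)) := by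
    have e1 : lam^2 = lam^((2:ℝ)) := by
      rw [show ((2:ℝ)) = ((2:ℕ):ℝ) by norm_num, Real.rpow_natCast]
    rw [e1, hrdef, ← Real.rpow_mul hlam0.le, ← Real.rpow_add hlam0]
    congr 1
    field_simp
    ring
  have hheadsum : ∑ j ∈ Finset.range J, t j ≤ (2:ℝ)^(2*α+1)/c₁^2 * lam^(1-1/(2*α)) := by
    have hb : ∀ j ∈ Finset.range J, t j ≤ lam^2 * (J:ℝ)^(2*α) / c₁^2 := by
      intro j hj
      refine (hhead j).trans ?_
      have hjJ : (j:ℝ)+1 ≤ (J:ℝ) := by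
        have := Finset.mem_range.1 hj
        exact_mod_cast Nat.succ_le_of_lt this
      have h5 := Real.rpow_le_rpow (by positivity) hjJ (by linarith : (0:ℝ) ≤ 2*α)
      have h6 : lam^2 * ((j:ℝ)+1)^(2*α) ≤ lam^2 * (J:ℝ)^(2*α) := by nlinarith [sq_nonneg lam]
      exact div_le_div_of_nonneg_right h6 (by positivity : (0:ℝ) ≤ c₁^2)
    have h7 := Finset.sum_le_sum hb
    rw [Finset.sum_const, Finset.card_range, nsmul_eq_mul] at h7
    refine h7.trans ?_
    have hJpow : (J:ℝ) * ((J:ℝ))^(2*α) = (J:ℝ)^(2*α+1) := by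
      rw [Real.rpow_add hJ0, Real.rpow_one, mul_comm]
    have h8 : (J:ℝ)^(2*α+1) ≤ (2*r)^(2*α+1) :=
      Real.rpow_le_rpow hJ0.le hJr (by linarith)
    have h9 : (2*r)^(2*α+1) = (2:ℝ)^(2*α+1) * r^(2*α+1) :=
      Real.mul_rpow (by norm_num) hr0.le
    have h10 : (0:ℝ) < (2:ℝ)^(2*α+1) := Real.rpow_pos_of_pos (by norm_num) _
    calc (J:ℝ) * (lam^2 * (J:ℝ)^(2*α) / c₁^2)
        = lam^2 * ((J:ℝ) * (J:ℝ)^(2*α)) / c₁^2 := by ring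
      _ = lam^2 * (J:ℝ)^(2*α+1) / c₁^2 := by rw [hJpow]
      _ ≤ lam^2 * ((2:ℝ)^(2*α+1) * r^(2*α+1)) / c₁^2 := by
          rw [← h9]
          gcongr
      _ = (2:ℝ)^(2*α+1)/c₁^2 * (lam^2 * r^(2*α+1)) := by ring
      _ = (2:ℝ)^(2*α+1)/c₁^2 * lam^(1-1/(2*α)) := by rw [hlamrpow]
  -- tail sum
  have htail : ∑' k:ℕ, t (k+J) ≤ 1/(2*α-1) * lam^(1-1/(2*α)) := by
    have hts : Summable (fun k => t (k+J)) := (summable_nat_add_iff J).2 htsum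
    have hus : Summable (fun k => u (k+J)) := (summable_nat_add_iff J).2 husum
    have h1 : ∑' k:ℕ, t (k+J) ≤ ∑' k:ℕ, u (k+J) :=
      Summable.tsum_le_tsum (fun k => htu _) hts hus
    have h2 : ∑' k:ℕ, u (k+J) ≤ (J:ℝ)^(1-2*α)/(2*α-1) := by
      apply Summable.tsum_le_of_sum_range_le hus
      intro n
      have hbnd := tail_sum_bound (2*α) hα2 J hJ1 n
      refine le_trans (le_of_eq ?_) hbnd
      apply Finset.sum_congr rfl
      intro k _
      simp only [hudef]
      congr 1
      push_cast; ring
    have h3 : (J:ℝ)^(1-2*α) ≤ r^(1-2*α) :=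
      Real.rpow_le_rpow_of_nonpos hr0 hrJ (by linarith)
    have h4 : r^(1-2*α) = lam^(1-1/(2*α)) := by
      rw [hrdef, ← Real.rpow_mul hlam0.le]
      congr 1
      field_simp
      ring
    have h5 : (J:ℝ)^(1-2*α)/(2*α-1) ≤ lam^(1-1/(2*α))/(2*α-1) := by
      have h6 : (J:ℝ)^(1-2*α) ≤ lam^(1-1/(2*α)) := by rw [← h4]; exact h3
      exact div_le_div_of_nonneg_right h6 (by linarith : (0:ℝ) ≤ 2*α-1)
    calc ∑' k:ℕ, t (k+J) ≤ (J:ℝ)^(1-2*α)/(2*α-1) := h1.trans h2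
      _ ≤ lam^(1-1/(2*α))/(2*α-1) := h5
      _ = 1/(2*α-1) * lam^(1-1/(2*α)) := by ring
  have hsplit := Summable.sum_add_tsum_nat_add J htsum
  rw [← hsplit]
  have hrhs : ((2:ℝ)^(2*α+1)/c₁^2 + 1/(2*α-1)) * lam^(1-1/(2*α))
      = (2:ℝ)^(2*α+1)/c₁^2 * lam^(1-1/(2*α)) + 1/(2*α-1) * lam^(1-1/(2*α)) := by ring
  rw [hrhs]
  exact add_le_add hheadsum htail

/-- sup-norm bias bound for the Sobolev class. -/
theorem statement13 (α Cψ c₁ c₂ : ℝ) (hα : 1/2 < α)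
    (hCψ : 0 < Cψ) (hc₁ : 0 < c₁) (hc₂ : 0 < c₂) :
    ∃ C > (0:ℝ), ∀ ψ : ℕ → ℝ → ℝ, ∀ μs : ℕ → ℝ,
      (∀ j k : ℕ, ∫ x in Icc (0:ℝ) 1, ψ j x * ψ k x = if j = k then 1 else 0) →
      (∀ j : ℕ, ∀ t ∈ Icc (0:ℝ) 1, |ψ j t| ≤ Cψ) →
      (∀ j : ℕ, 0 < μs j) →
      (∀ j : ℕ, c₁ * ((j:ℝ) + 1) ^ (-(2*α)) ≤ μs j) →
      (∀ j : ℕ, μs j ≤ c₂ * ((j:ℝ) + 1) ^ (-(2*α))) →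
      ∀ lam : ℝ, lam ∈ Ioc (0:ℝ) 1 → ∀ B : ℝ, 0 < B → ∀ fstar : ℕ → ℝ,
        Summable (fun j : ℕ => ((j:ℝ) + 1) ^ (2*α) * fstar j ^ 2) →
        (∑' j : ℕ, ((j:ℝ) + 1) ^ (2*α) * fstar j ^ 2) ≤ B ^ 2 →
        supNorm01 (seriesFun ψ (PlamCoef μs lam fstar)) ≤
          C * B * lam ^ (1/2 - 1/(4*α)) := by
  have hα0 : (0:ℝ) < α := by linarith
  have hαne : α ≠ 0 := ne_of_gt hα0
  set C' : ℝ := (2:ℝ)^(2*α+1)/c₁^2 + 1/(2*α-1) with hC'def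
  have h2a1 : (0:ℝ) < 2*α-1 := by linarith
  have hC'0 : 0 < C' := by
    have h1 : (0:ℝ) < (2:ℝ)^(2*α+1) := Real.rpow_pos_of_pos (by norm_num) _
    have h2 : (0:ℝ) < 1/(2*α-1) := by positivity
    have h3 : (0:ℝ) < (2:ℝ)^(2*α+1)/c₁^2 := by positivity
    rw [hC'def]; linarith
  have hsqrtC' : 0 < Real.sqrt C' := Real.sqrt_pos.2 hC'0
  refine ⟨Cψ * Real.sqrt C', mul_pos hCψ hsqrtC', ?_⟩
  intro ψ μs horth hψb hμpos hμlo hμhi lam hlam B hB fstar hfsum hfle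
  obtain ⟨hlam0, hlam1⟩ := hlam
  obtain ⟨htS, hS⟩ := S_bound α c₁ hα hc₁ μs hμpos hμlo lam hlam0 hlam1
  set e : ℝ := 1-1/(2*α) with hedef
  set S' : ℝ := C' * lam ^ e with hS'def
  have hS'0 : 0 < S' := by
    have := Real.rpow_pos_of_pos hlam0 e
    rw [hS'def]; positivity
  set c : ℕ → ℝ := PlamCoef μs lam fstar with hcdef
  set M : ℝ := B * Real.sqrt S' with hMdef
  have hM0 : 0 ≤ M := by
    have := Real.sqrt_nonneg S'
    rw [hMdef]; positivity
  have habs : ∀ j, |c j| = (lam/(μs j+lam)) * |fstar j| := by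
    intro j
    have hμ := hμpos j
    rw [hcdef]
    simp only [PlamCoef]
    rw [abs_mul, abs_of_nonneg (by positivity : (0:ℝ) ≤ lam/(μs j+lam))]
  have hpartial : ∀ n, ∑ j ∈ Finset.range n, |c j| ≤ M := by
    intro n
    have hprod : ∀ j:ℕ, ((j:ℝ)+1)^α * |fstar j| * ((lam/(μs j+lam)) * ((j:ℝ)+1)^(-α)) = |c j| := by
      intro j
      have hw0 : (0:ℝ) < (j:ℝ)+1 := by positivity
      have hww : ((j:ℝ)+1)^α * ((j:ℝ)+1)^(-α) = 1 := by
        rw [← Real.rpow_add hw0]; norm_num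
      rw [habs j]
      calc ((j:ℝ)+1)^α * |fstar j| * ((lam/(μs j+lam)) * ((j:ℝ)+1)^(-α))
          = (((j:ℝ)+1)^α * ((j:ℝ)+1)^(-α)) * ((lam/(μs j+lam)) * |fstar j|) := by ring
        _ = (lam/(μs j+lam)) * |fstar j| := by rw [hww, one_mul]
    have hsq1 : ∀ j:ℕ, (((j:ℝ)+1)^α * |fstar j|)^2 = ((j:ℝ)+1)^(2*α) * fstar j^2 := by
      intro j
      have hw0 : (0:ℝ) < (j:ℝ)+1 := by positivity
      have h2 : (((j:ℝ)+1)^α)^2 = ((j:ℝ)+1)^(2*α) := by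
        rw [← Real.rpow_natCast (((j:ℝ)+1)^α) 2, ← Real.rpow_mul hw0.le]
        congr 1
        push_cast; ring
      rw [mul_pow, h2, sq_abs]
    have hsq2 : ∀ j:ℕ, ((lam/(μs j+lam)) * ((j:ℝ)+1)^(-α))^2
        = (lam/(μs j+lam))^2 * ((j:ℝ)+1)^(-(2*α)) := by
      intro j
      have hw0 : (0:ℝ) < (j:ℝ)+1 := by positivity
      have h2 : (((j:ℝ)+1)^(-α))^2 = ((j:ℝ)+1)^(-(2*α)) := by
        rw [← Real.rpow_natCast (((j:ℝ)+1)^(-α)) 2, ← Real.rpow_mul hw0.le]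
        congr 1
        push_cast; ring
      rw [mul_pow, h2]
    have hCS := Finset.sum_mul_sq_le_sq_mul_sq (Finset.range n)
        (fun j => ((j:ℝ)+1)^α * |fstar j|)
        (fun j => (lam/(μs j+lam)) * ((j:ℝ)+1)^(-α))
    have e1 : ∑ j ∈ Finset.range n,
        (((j:ℝ)+1)^α * |fstar j| * ((lam/(μs j+lam)) * ((j:ℝ)+1)^(-α)))
        = ∑ j ∈ Finset.range n, |c j| :=
      Finset.sum_congr rfl (fun j _ => hprod j)
    have e2 : ∑ j ∈ Finset.range n, (((j:ℝ)+1)^α * |fstar j|)^2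
        = ∑ j ∈ Finset.range n, ((j:ℝ)+1)^(2*α) * fstar j^2 :=
      Finset.sum_congr rfl (fun j _ => hsq1 j)
    have e3 : ∑ j ∈ Finset.range n, ((lam/(μs j+lam)) * ((j:ℝ)+1)^(-α))^2
        = ∑ j ∈ Finset.range n, (lam/(μs j+lam))^2 * ((j:ℝ)+1)^(-(2*α)) :=
      Finset.sum_congr rfl (fun j _ => hsq2 j)
    rw [e1, e2, e3] at hCS
    have hs1 : ∑ j ∈ Finset.range n, ((j:ℝ)+1)^(2*α) * fstar j^2 ≤ B^2 := by
      refine le_trans (Summable.sum_le_tsum (Finset.range n) (fun j _ => ?_) hfsum) hfle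
      have hw0 : (0:ℝ) < (j:ℝ)+1 := by positivity
      positivity
    have hs2 : ∑ j ∈ Finset.range n, (lam/(μs j+lam))^2 * ((j:ℝ)+1)^(-(2*α)) ≤ S' := by
      refine le_trans (Summable.sum_le_tsum (Finset.range n) (fun j _ => ?_) htS) ?_
      · have hw0 : (0:ℝ) < (j:ℝ)+1 := by positivity
        positivity
      · rw [hS'def, hedef]; exact hS
    have hs1nn : (0:ℝ) ≤ ∑ j ∈ Finset.range n, ((j:ℝ)+1)^(2*α) * fstar j^2 := by
      apply Finset.sum_nonneg
      intro j _
      have hw0 : (0:ℝ) < (j:ℝ)+1 := by positivity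
      positivity
    have hs2nn : (0:ℝ) ≤ ∑ j ∈ Finset.range n, (lam/(μs j+lam))^2 * ((j:ℝ)+1)^(-(2*α)) := by
      apply Finset.sum_nonneg
      intro j _
      have hw0 : (0:ℝ) < (j:ℝ)+1 := by positivity
      positivity
    have hsq : (∑ j ∈ Finset.range n, |c j|)^2 ≤ M^2 := by
      have hMsq : M^2 = B^2 * S' := by
        rw [hMdef, mul_pow, Real.sq_sqrt hS'0.le]
      rw [hMsq]
      calc (∑ j ∈ Finset.range n, |c j|)^2
          ≤ (∑ j ∈ Finset.range n, ((j:ℝ)+1)^(2*α) * fstar j^2) *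
            (∑ j ∈ Finset.range n, (lam/(μs j+lam))^2 * ((j:ℝ)+1)^(-(2*α))) := hCS
        _ ≤ B^2 * S' := mul_le_mul hs1 hs2 hs2nn (by positivity)
    have hsnn : (0:ℝ) ≤ ∑ j ∈ Finset.range n, |c j| :=
      Finset.sum_nonneg (fun j _ => abs_nonneg _)
    calc ∑ j ∈ Finset.range n, |c j|
        = Real.sqrt ((∑ j ∈ Finset.range n, |c j|)^2) := (Real.sqrt_sq hsnn).symm
      _ ≤ Real.sqrt (M^2) := Real.sqrt_le_sqrt hsq
      _ = M := Real.sqrt_sq hM0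
  have hcsum : Summable (fun j => |c j|) :=
    summable_of_sum_range_le (fun n => abs_nonneg _) hpartial
  have hctsum : ∑' j:ℕ, |c j| ≤ M := Summable.tsum_le_of_sum_range_le hcsum hpartial
  have hfx : ∀ x : Icc (0:ℝ) 1, |seriesFun ψ c x.1| ≤ Cψ * M := by
    intro x
    have hb : ∀ j:ℕ, ‖c j * ψ j x.1‖ ≤ Cψ * |c j| := by
      intro j
      rw [Real.norm_eq_abs, abs_mul]
      have h1 := hψb j x.1 x.2
      have h2 : |c j| * |ψ j x.1| ≤ |c j| * Cψ :=
        mul_le_mul_of_nonneg_left h1 (abs_nonneg _)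
      linarith [h2, mul_comm (|c j|) Cψ]
    have hs2 : Summable (fun j => Cψ * |c j|) := hcsum.mul_left Cψ
    have hs1 : Summable (fun j => ‖c j * ψ j x.1‖) :=
      Summable.of_nonneg_of_le (fun j => norm_nonneg _) hb hs2
    have h1 : ‖∑' j:ℕ, c j * ψ j x.1‖ ≤ ∑' j:ℕ, ‖c j * ψ j x.1‖ :=
      norm_tsum_le_tsum_norm hs1
    have h2 : ∑' j:ℕ, ‖c j * ψ j x.1‖ ≤ ∑' j:ℕ, Cψ * |c j| := Summable.tsum_le_tsum hb hs1 hs2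
    have h3 : ∑' j:ℕ, Cψ * |c j| = Cψ * ∑' j:ℕ, |c j| := tsum_mul_left
    have h4 : Cψ * ∑' j:ℕ, |c j| ≤ Cψ * M := mul_le_mul_of_nonneg_left hctsum hCψ.le
    have h5 : seriesFun ψ c x.1 = ∑' j:ℕ, c j * ψ j x.1 := rfl
    rw [h5, ← Real.norm_eq_abs]
    linarith
  have hsup : supNorm01 (seriesFun ψ c) ≤ Cψ * M := by
    apply Real.iSup_le (fun x => hfx x)
    positivity
  refine hsup.trans (le_of_eq ?_)
  have he2 : e * (1/2) = 1/2 - 1/(4*α) := by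
    rw [hedef]; field_simp; ring
  have hsl : Real.sqrt (lam ^ e) = lam ^ (1/2 - 1/(4*α)) := by
    rw [Real.sqrt_eq_rpow, ← Real.rpow_mul hlam0.le, he2]
  rw [hMdef, hS'def, Real.sqrt_mul hC'0.le, hsl]
  ring
end
end

section
/- Let α > 0 and let m = ⌊α⌋ denote the largest integer strictly smaller than α. Let (f_k)_{k≥1} be real coefficients with Σ_{k=1}^∞ k^α |f_k| ≤ B, and define f : [0,1] → ℝ by f(x) = Σ_{j=1}^∞ [ f_{2j−1} sin(π j x) + f_{2j} cos(π j x) ]. Then f is m-times continuously differentiable on [0,1], and there exists a constant C > 0 depending only on α such that | f^{(m)}(x) − f^{(m)}(y) | ≤ C B |x − y|^{α − m} for all x, y ∈ [0,1]. -/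
open MeasureTheory ProbabilityTheory Real Set

noncomputable section

namespace Stmt16Aux

lemma abs_sin_sub_le (u v : ℝ) : |Real.sin u - Real.sin v| ≤ |u - v| := by
  rw [Real.sin_sub_sin]
  have h1 : |Real.sin ((u - v) / 2)| ≤ |(u - v) / 2| := Real.abs_sin_le_abs
  have h2 : |Real.cos ((u + v) / 2)| ≤ 1 := Real.abs_cos_le_one _
  have h3 : |(u - v) / 2| = |u - v| / 2 := by rw [abs_div]; norm_num
  rw [abs_mul, abs_mul]
  calc |(2:ℝ)| * |Real.sin ((u - v) / 2)| * |Real.cos ((u + v) / 2)|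
      ≤ |(2:ℝ)| * |(u - v) / 2| * 1 := by gcongr
    _ = |u - v| := by rw [h3, abs_two]; ring

lemma abs_cos_sub_le (u v : ℝ) : |Real.cos u - Real.cos v| ≤ |u - v| := by
  rw [Real.cos_sub_cos]
  have h1 : |Real.sin ((u - v) / 2)| ≤ |(u - v) / 2| := Real.abs_sin_le_abs
  have h2 : |Real.sin ((u + v) / 2)| ≤ 1 := Real.abs_sin_le_one _
  have h3 : |(u - v) / 2| = |u - v| / 2 := by rw [abs_div]; norm_num
  rw [abs_mul, abs_mul]
  calc |(-2:ℝ)| * |Real.sin ((u + v) / 2)| * |Real.sin ((u - v) / 2)|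
      ≤ |(-2:ℝ)| * 1 * |(u - v) / 2| := by gcongr
    _ = |u - v| := by rw [h3, abs_neg, abs_two]; ring

lemma min_le_two_rpow {t β : ℝ} (ht : 0 ≤ t) (hβ0 : 0 < β) (hβ1 : β ≤ 1) :
    min 2 t ≤ 2 * t ^ β := by
  rcases eq_or_lt_of_le ht with h0 | h0
  · rw [← h0, Real.zero_rpow hβ0.ne']
    simp
  rcases le_total t 1 with h | h
  · have h1 : t ^ (1:ℝ) ≤ t ^ β := Real.rpow_le_rpow_of_exponent_ge h0 h hβ1
    rw [Real.rpow_one] at h1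
    have h2 : 0 ≤ t ^ β := Real.rpow_nonneg ht β
    calc min 2 t ≤ t := min_le_right _ _
      _ ≤ t ^ β := h1
      _ ≤ 2 * t ^ β := by linarith
  · have h1 : (1:ℝ) ≤ t ^ β := Real.one_le_rpow h hβ0.le
    calc min 2 t ≤ 2 := min_le_left _ _
      _ ≤ 2 * t ^ β := by linarith

lemma trig_contDiff (lam a b : ℝ) :
    ContDiff ℝ (⊤ : ℕ∞) (fun x : ℝ => a * Real.sin (lam * x) + b * Real.cos (lam * x)) := by
  have h : ContDiff ℝ (⊤ : ℕ∞) (fun x : ℝ => lam * x) := contDiff_const.mul contDiff_id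
  exact (contDiff_const.mul (Real.contDiff_sin.comp h)).add
    (contDiff_const.mul (Real.contDiff_cos.comp h))

lemma trig_iteratedDeriv (lam : ℝ) : ∀ (k : ℕ) (a b : ℝ),
    ∃ A B : ℝ, |A| + |B| = |lam| ^ k * (|a| + |b|) ∧
      iteratedDeriv k (fun x => a * Real.sin (lam * x) + b * Real.cos (lam * x)) =
        fun x => A * Real.sin (lam * x) + B * Real.cos (lam * x) := by
  intro k
  induction k with
  | zero => exact fun a b => ⟨a, b, by simp, by simp [iteratedDeriv_zero]⟩
  | succ k IH =>
    intro a b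
    have hderiv : deriv (fun x => a * Real.sin (lam * x) + b * Real.cos (lam * x)) =
        fun x => (-(lam * b)) * Real.sin (lam * x) + (lam * a) * Real.cos (lam * x) := by
      funext x
      have h0 : HasDerivAt (fun x : ℝ => lam * x) lam x := by
        simpa using (hasDerivAt_id x).const_mul lam
      have h1 : HasDerivAt (fun x : ℝ => Real.sin (lam * x)) (Real.cos (lam * x) * lam) x :=
        (Real.hasDerivAt_sin (lam * x)).comp x h0
      have h2 : HasDerivAt (fun x : ℝ => Real.cos (lam * x)) (-Real.sin (lam * x) * lam) x :=
        (Real.hasDerivAt_cos (lam * x)).comp x h0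
      refine ((h1.const_mul a).add (h2.const_mul b)).deriv.trans ?_
      ring
    obtain ⟨A, B, hAB, hit⟩ := IH (-(lam * b)) (lam * a)
    refine ⟨A, B, ?_, ?_⟩
    · rw [hAB, abs_neg, abs_mul, abs_mul]; ring
    · rw [iteratedDeriv_succ', hderiv, hit]


/-- The series function. -/
def gt (a b : ℕ → ℝ) (j : ℕ) : ℝ → ℝ := fun x =>
  a j * Real.sin (π * ((j:ℝ) + 1) * x) + b j * Real.cos (π * ((j:ℝ) + 1) * x)

def Fsum (a b : ℕ → ℝ) : ℝ → ℝ := fun x => ∑' j : ℕ, gt a b j x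

lemma iteratedDerivWithin_eq_iteratedDeriv_of_contDiff {n : ℕ∞} {f : ℝ → ℝ}
    (hf : ContDiff ℝ n f) {s : Set ℝ} (hs : UniqueDiffOn ℝ s) {m : ℕ}
    (hmn : (m : ℕ∞) ≤ n) {x : ℝ} (hx : x ∈ s) :
    iteratedDerivWithin m f s x = iteratedDeriv m f x := by
  have h1 := ((hasFTaylorSeriesUpToOn_univ_iff.2
    (contDiff_iff_ftaylorSeries.mp hf)).mono (subset_univ s)).eq_iteratedFDerivWithin_of_uniqueDiffOn
    (by exact_mod_cast hmn) hs hx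
  rw [iteratedDerivWithin_eq_iteratedFDerivWithin, iteratedDeriv_eq_iteratedFDeriv, ← h1]
  rfl

lemma main_aux (α : ℝ) (hα : 0 < α) (m : ℕ) (hm1 : (m:ℝ) < α) (hm2 : α ≤ (m:ℝ) + 1)
    (a b : ℕ → ℝ)
    (hS : Summable fun j : ℕ => ((j:ℝ) + 1) ^ α * (|a j| + |b j|)) :
    ContDiff ℝ (m : ℕ∞) (Fsum a b) ∧
    ∀ x y : ℝ, |iteratedDeriv m (Fsum a b) x - iteratedDeriv m (Fsum a b) y| ≤
      2 * π ^ α * (∑' j : ℕ, ((j:ℝ) + 1) ^ α * (|a j| + |b j|)) * |x - y| ^ (α - (m:ℝ)) := by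
  set β := α - (m:ℝ) with hβ
  have hβ0 : 0 < β := sub_pos.2 hm1
  have hβ1 : β ≤ 1 := by rw [hβ]; linarith
  have hlam1 : ∀ j : ℕ, 1 ≤ π * ((j:ℝ) + 1) := by
    intro j
    nlinarith [Real.pi_gt_three, Nat.cast_nonneg (α := ℝ) j]
  have hlampos : ∀ j : ℕ, 0 < π * ((j:ℝ) + 1) := fun j => lt_of_lt_of_le one_pos (hlam1 j)
  have hg : ∀ j, ContDiff ℝ (m : ℕ∞) (gt a b j) := fun j =>
    (trig_contDiff (π * ((j:ℝ) + 1)) (a j) (b j)).of_le (mod_cast le_top)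
  set v : ℕ → ℕ → ℝ := fun _ j => (π * ((j:ℝ) + 1)) ^ m * (|a j| + |b j|) with hv
  have hpow_le : ∀ j : ℕ, ((j:ℝ) + 1) ^ m ≤ ((j:ℝ) + 1) ^ α := by
    intro j
    rw [← Real.rpow_natCast ((j:ℝ) + 1) m]
    exact Real.rpow_le_rpow_of_exponent_le
      (by linarith [Nat.cast_nonneg (α := ℝ) j]) hm1.le
  have hvsum : ∀ k : ℕ, (k : ℕ∞) ≤ (m : ℕ∞) → Summable (v k) := by
    intro k _
    apply Summable.of_nonneg_of_le
      (f := fun j : ℕ => π ^ m * (((j:ℝ) + 1) ^ α * (|a j| + |b j|)))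
      (fun j => by
        show (0:ℝ) ≤ (π * ((j:ℝ) + 1)) ^ m * (|a j| + |b j|)
        positivity)
    · intro j
      show (π * ((j:ℝ) + 1)) ^ m * (|a j| + |b j|) ≤ _
      rw [mul_pow, mul_assoc]
      exact mul_le_mul_of_nonneg_left
        (mul_le_mul_of_nonneg_right (hpow_le j) (by positivity)) (by positivity)
    · exact hS.mul_left _
  have hbound : ∀ (k : ℕ) (j : ℕ) (x : ℝ), (k : ℕ∞) ≤ (m : ℕ∞) →
      ‖iteratedFDeriv ℝ k (gt a b j) x‖ ≤ v k j := by
    intro k j x hk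
    have hk' : k ≤ m := by exact_mod_cast hk
    obtain ⟨A, B, hAB, hit⟩ := trig_iteratedDeriv (π * ((j:ℝ) + 1)) k (a j) (b j)
    rw [norm_iteratedFDeriv_eq_norm_iteratedDeriv,
      show gt a b j = fun x => a j * Real.sin (π * ((j:ℝ) + 1) * x) +
        b j * Real.cos (π * ((j:ℝ) + 1) * x) from rfl, hit]
    simp only [Real.norm_eq_abs]
    have h1 : |A * Real.sin (π * ((j:ℝ) + 1) * x) + B * Real.cos (π * ((j:ℝ) + 1) * x)|
        ≤ |A| + |B| := by
      calc |A * Real.sin (π * ((j:ℝ) + 1) * x) + B * Real.cos (π * ((j:ℝ) + 1) * x)|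
          ≤ |A * Real.sin (π * ((j:ℝ) + 1) * x)| + |B * Real.cos (π * ((j:ℝ) + 1) * x)| :=
            abs_add_le _ _
        _ ≤ |A| * 1 + |B| * 1 := by
            rw [abs_mul, abs_mul]
            gcongr
            · exact Real.abs_sin_le_one _
            · exact Real.abs_cos_le_one _
        _ = |A| + |B| := by ring
    refine h1.trans ?_
    rw [hAB, abs_of_pos (hlampos j)]
    show _ ≤ (π * ((j:ℝ) + 1)) ^ m * (|a j| + |b j|)
    have hpow : (π * ((j:ℝ) + 1)) ^ k ≤ (π * ((j:ℝ) + 1)) ^ m := by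
      gcongr
      exact hlam1 j
    exact mul_le_mul_of_nonneg_right hpow (by positivity)
  have hcd : ContDiff ℝ (m : ℕ∞) (Fsum a b) := by
    rw [show Fsum a b = fun x => ∑' j : ℕ, gt a b j x from rfl]
    exact contDiff_tsum hg hvsum hbound
  refine ⟨hcd, ?_⟩
  have hiter : ∀ x : ℝ, iteratedDeriv m (Fsum a b) x = ∑' j : ℕ, iteratedDeriv m (gt a b j) x := by
    intro x
    have hsumT : Summable (fun j => iteratedFDeriv ℝ m (gt a b j) x) :=
      Summable.of_norm_bounded (hvsum m le_rfl) (fun j => hbound m j x le_rfl)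
    rw [iteratedDeriv_eq_iteratedFDeriv,
      show Fsum a b = fun x => ∑' j : ℕ, gt a b j x from rfl,
      iteratedFDeriv_tsum_apply hg hvsum hbound le_rfl x,
      ← (ContinuousMultilinearMap.hasSum_eval hsumT.hasSum (fun _ : Fin m => (1:ℝ))).tsum_eq]
    exact tsum_congr fun j => (iteratedDeriv_eq_iteratedFDeriv).symm
  intro x y
  rw [hiter x, hiter y]
  have habs : ∀ (z : ℝ) (j : ℕ), |iteratedDeriv m (gt a b j) z| ≤ v m j := by
    intro z j
    rw [← Real.norm_eq_abs, ← norm_iteratedFDeriv_eq_norm_iteratedDeriv]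
    exact hbound m j z le_rfl
  have hsx : Summable fun j => iteratedDeriv m (gt a b j) x :=
    Summable.of_norm_bounded (hvsum m le_rfl) (fun j => by
      rw [Real.norm_eq_abs]; exact habs x j)
  have hsy : Summable fun j => iteratedDeriv m (gt a b j) y :=
    Summable.of_norm_bounded (hvsum m le_rfl) (fun j => by
      rw [Real.norm_eq_abs]; exact habs y j)
  rw [← Summable.tsum_sub hsx hsy]
  have key : ∀ j : ℕ, |iteratedDeriv m (gt a b j) x - iteratedDeriv m (gt a b j) y| ≤
      (((j:ℝ) + 1) ^ α * (|a j| + |b j|)) * (2 * π ^ α * |x - y| ^ β) := by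
    intro j
    obtain ⟨A, B, hAB, hit⟩ := trig_iteratedDeriv (π * ((j:ℝ) + 1)) m (a j) (b j)
    rw [show gt a b j = fun x => a j * Real.sin (π * ((j:ℝ) + 1) * x) +
      b j * Real.cos (π * ((j:ℝ) + 1) * x) from rfl, hit]
    simp only
    set lam := π * ((j:ℝ) + 1) with hlamdef
    have hlpos : 0 < lam := hlampos j
    have h1 : |Real.sin (lam * x) - Real.sin (lam * y)| ≤ min 2 (lam * |x - y|) := by
      refine le_min ?_ ?_
      · calc |Real.sin (lam * x) - Real.sin (lam * y)|
            ≤ |Real.sin (lam * x)| + |Real.sin (lam * y)| := abs_sub _ _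
          _ ≤ 2 := by
              have := Real.abs_sin_le_one (lam * x)
              have := Real.abs_sin_le_one (lam * y)
              linarith
      · calc |Real.sin (lam * x) - Real.sin (lam * y)| ≤ |lam * x - lam * y| :=
            abs_sin_sub_le _ _
          _ = lam * |x - y| := by
              rw [← mul_sub, abs_mul, abs_of_pos hlpos]
    have h2 : |Real.cos (lam * x) - Real.cos (lam * y)| ≤ min 2 (lam * |x - y|) := by
      refine le_min ?_ ?_
      · calc |Real.cos (lam * x) - Real.cos (lam * y)|
            ≤ |Real.cos (lam * x)| + |Real.cos (lam * y)| := abs_sub _ _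
          _ ≤ 2 := by
              have := Real.abs_cos_le_one (lam * x)
              have := Real.abs_cos_le_one (lam * y)
              linarith
      · calc |Real.cos (lam * x) - Real.cos (lam * y)| ≤ |lam * x - lam * y| :=
            abs_cos_sub_le _ _
          _ = lam * |x - y| := by
              rw [← mul_sub, abs_mul, abs_of_pos hlpos]
    have hmin : min 2 (lam * |x - y|) ≤ 2 * (lam * |x - y|) ^ β :=
      min_le_two_rpow (by positivity) hβ0 hβ1
    have hstep : |(A * Real.sin (lam * x) + B * Real.cos (lam * x)) -
        (A * Real.sin (lam * y) + B * Real.cos (lam * y))| ≤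
        (|A| + |B|) * (2 * (lam * |x - y|) ^ β) := by
      calc |(A * Real.sin (lam * x) + B * Real.cos (lam * x)) -
            (A * Real.sin (lam * y) + B * Real.cos (lam * y))|
          = |A * (Real.sin (lam * x) - Real.sin (lam * y)) +
              B * (Real.cos (lam * x) - Real.cos (lam * y))| := by ring_nf
        _ ≤ |A * (Real.sin (lam * x) - Real.sin (lam * y))| +
              |B * (Real.cos (lam * x) - Real.cos (lam * y))| := abs_add_le _ _
        _ = |A| * |Real.sin (lam * x) - Real.sin (lam * y)| +
              |B| * |Real.cos (lam * x) - Real.cos (lam * y)| := by rw [abs_mul, abs_mul]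
        _ ≤ |A| * min 2 (lam * |x - y|) + |B| * min 2 (lam * |x - y|) := by gcongr
        _ = (|A| + |B|) * min 2 (lam * |x - y|) := by ring
        _ ≤ (|A| + |B|) * (2 * (lam * |x - y|) ^ β) :=
            mul_le_mul_of_nonneg_left hmin (by positivity)
    refine hstep.trans (le_of_eq ?_)
    rw [hAB, abs_of_pos hlpos]
    have e1 : (lam * |x - y|) ^ β = lam ^ β * |x - y| ^ β :=
      Real.mul_rpow hlpos.le (abs_nonneg _)
    have e2 : (lam : ℝ) ^ (m : ℕ) * lam ^ β = lam ^ α := by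
      rw [← Real.rpow_natCast lam m, ← Real.rpow_add hlpos]
      congr 1
      rw [hβ]; ring
    have e3 : lam ^ α = π ^ α * ((j:ℝ) + 1) ^ α := by
      rw [hlamdef]
      exact Real.mul_rpow Real.pi_pos.le (by positivity)
    rw [e1]
    calc lam ^ m * (|a j| + |b j|) * (2 * (lam ^ β * |x - y| ^ β))
        = (lam ^ m * lam ^ β) * (|a j| + |b j|) * (2 * |x - y| ^ β) := by ring
      _ = π ^ α * ((j:ℝ) + 1) ^ α * (|a j| + |b j|) * (2 * |x - y| ^ β) := by rw [e2, e3]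
      _ = ((j:ℝ) + 1) ^ α * (|a j| + |b j|) * (2 * π ^ α * |x - y| ^ β) := by ring
  have hkey_sum : Summable (fun j : ℕ => (((j:ℝ) + 1) ^ α * (|a j| + |b j|)) *
      (2 * π ^ α * |x - y| ^ β)) := hS.mul_right _
  calc |∑' j : ℕ, (iteratedDeriv m (gt a b j) x - iteratedDeriv m (gt a b j) y)|
      ≤ ∑' j : ℕ, |iteratedDeriv m (gt a b j) x - iteratedDeriv m (gt a b j) y| := by
        simpa only [Real.norm_eq_abs] using
          norm_tsum_le_tsum_norm (f := fun j => iteratedDeriv m (gt a b j) x -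
            iteratedDeriv m (gt a b j) y)
            (Summable.of_nonneg_of_le (fun j => by positivity)
              (fun j => by simpa only [Real.norm_eq_abs] using key j) hkey_sum)
    _ ≤ ∑' j : ℕ, (((j:ℝ) + 1) ^ α * (|a j| + |b j|)) * (2 * π ^ α * |x - y| ^ β) := by
        refine Summable.tsum_le_tsum key ?_ hkey_sum
        exact Summable.of_nonneg_of_le (fun j => abs_nonneg _) key hkey_sum
    _ = (∑' j : ℕ, ((j:ℝ) + 1) ^ α * (|a j| + |b j|)) * (2 * π ^ α * |x - y| ^ β) :=
        tsum_mul_right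
    _ = 2 * π ^ α * (∑' j : ℕ, ((j:ℝ) + 1) ^ α * (|a j| + |b j|)) * |x - y| ^ β := by ring

end Stmt16Aux

/-- Hölder smoothness of trigonometric series with summable weighted
coefficients. -/
theorem statement16 (α : ℝ) (hα : 0 < α) (m : ℕ) (hm1 : (m:ℝ) < α) (hm2 : α ≤ (m:ℝ) + 1) :
    ∃ C > (0:ℝ), ∀ B : ℝ, ∀ c : ℕ → ℝ,
      Summable (fun k : ℕ => ((k:ℝ) + 1) ^ α * |c (k + 1)|) →
      (∑' k : ℕ, ((k:ℝ) + 1) ^ α * |c (k + 1)|) ≤ B →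
      ∀ f : ℝ → ℝ,
        (∀ x : ℝ, f x = ∑' j : ℕ,
          (c (2*j + 1) * Real.sin (π * ((j:ℝ) + 1) * x) +
            c (2*j + 2) * Real.cos (π * ((j:ℝ) + 1) * x))) →
        ContDiffOn ℝ (m : ℕ∞) f (Icc (0:ℝ) 1) ∧
        ∀ x ∈ Icc (0:ℝ) 1, ∀ y ∈ Icc (0:ℝ) 1,
          |iteratedDerivWithin m f (Icc (0:ℝ) 1) x -
            iteratedDerivWithin m f (Icc (0:ℝ) 1) y| ≤
            C * B * |x - y| ^ (α - (m:ℝ)) := by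
  have hπ1 : (1:ℝ) ≤ π := by nlinarith [Real.pi_gt_three]
  refine ⟨4 * π ^ α, by positivity, ?_⟩
  intro B c hc hcB f hf
  set a : ℕ → ℝ := fun j => c (2*j + 1) with ha
  set b : ℕ → ℝ := fun j => c (2*j + 2) with hb
  have hinj1 : Function.Injective (fun j : ℕ => 2*j) := by intro x y h; simp only at h; omega
  have hinj2 : Function.Injective (fun j : ℕ => 2*j + 1) := by intro x y h; simp only at h; omega
  have hterm_a : ∀ j : ℕ, ((j:ℝ) + 1) ^ α * |a j| ≤
      (((2*j : ℕ):ℝ) + 1) ^ α * |c ((2*j) + 1)| := by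
    intro j
    apply mul_le_mul_of_nonneg_right _ (abs_nonneg _)
    exact Real.rpow_le_rpow (by positivity)
      (by push_cast; linarith [Nat.cast_nonneg (α := ℝ) j]) hα.le
  have hterm_b : ∀ j : ℕ, ((j:ℝ) + 1) ^ α * |b j| ≤
      (((2*j + 1 : ℕ):ℝ) + 1) ^ α * |c ((2*j + 1) + 1)| := by
    intro j
    apply mul_le_mul_of_nonneg_right _ (abs_nonneg _)
    exact Real.rpow_le_rpow (by positivity)
      (by push_cast; linarith [Nat.cast_nonneg (α := ℝ) j]) hα.le
  have hsa : Summable (fun j : ℕ => ((j:ℝ) + 1) ^ α * |a j|) :=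
    Summable.of_nonneg_of_le (fun j => by positivity) hterm_a (hc.comp_injective hinj1)
  have hsb : Summable (fun j : ℕ => ((j:ℝ) + 1) ^ α * |b j|) :=
    Summable.of_nonneg_of_le (fun j => by positivity) hterm_b (hc.comp_injective hinj2)
  have htsum_a : (∑' j : ℕ, ((j:ℝ) + 1) ^ α * |a j|) ≤ B :=
    le_trans (Summable.tsum_le_tsum_of_inj (fun j : ℕ => 2*j) hinj1 (fun k _ => by positivity)
      hterm_a hsa hc) hcB
  have htsum_b : (∑' j : ℕ, ((j:ℝ) + 1) ^ α * |b j|) ≤ B :=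
    le_trans (Summable.tsum_le_tsum_of_inj (fun j : ℕ => 2*j + 1) hinj2 (fun k _ => by positivity)
      hterm_b hsb hc) hcB
  have hS : Summable (fun j : ℕ => ((j:ℝ) + 1) ^ α * (|a j| + |b j|)) := by
    simpa [mul_add] using hsa.add hsb
  have hS_le : (∑' j : ℕ, ((j:ℝ) + 1) ^ α * (|a j| + |b j|)) ≤ 2 * B := by
    calc (∑' j : ℕ, ((j:ℝ) + 1) ^ α * (|a j| + |b j|))
        = ∑' j : ℕ, (((j:ℝ) + 1) ^ α * |a j| + ((j:ℝ) + 1) ^ α * |b j|) :=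
          tsum_congr fun j => mul_add _ _ _
      _ = (∑' j : ℕ, ((j:ℝ) + 1) ^ α * |a j|) + ∑' j : ℕ, ((j:ℝ) + 1) ^ α * |b j| :=
          Summable.tsum_add hsa hsb
      _ ≤ B + B := add_le_add htsum_a htsum_b
      _ = 2 * B := by ring
  obtain ⟨hcd, hest⟩ := Stmt16Aux.main_aux α hα m hm1 hm2 a b hS
  have hfF : f = Stmt16Aux.Fsum a b := funext hf
  have hB0 : 0 ≤ B := le_trans (tsum_nonneg fun k => by positivity) hcB
  constructor
  · rw [hfF]; exact hcd.contDiffOn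
  · intro x hx y hy
    rw [hfF]
    have hud : UniqueDiffOn ℝ (Icc (0:ℝ) 1) := uniqueDiffOn_Icc zero_lt_one
    rw [Stmt16Aux.iteratedDerivWithin_eq_iteratedDeriv_of_contDiff hcd hud le_rfl hx,
      Stmt16Aux.iteratedDerivWithin_eq_iteratedDeriv_of_contDiff hcd hud le_rfl hy]
    refine (hest x y).trans ?_
    have ht0 : (0:ℝ) ≤ |x - y| ^ (α - (m:ℝ)) := Real.rpow_nonneg (abs_nonneg _) _
    calc 2 * π ^ α * (∑' j : ℕ, ((j:ℝ) + 1) ^ α * (|a j| + |b j|)) * |x - y| ^ (α - (m:ℝ))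
        ≤ 2 * π ^ α * (2 * B) * |x - y| ^ (α - (m:ℝ)) := by
          gcongr
      _ = 4 * π ^ α * B * |x - y| ^ (α - (m:ℝ)) := by ring
end
end

section
/- Sup-norm embedding for the equivalent-kernel norm: there exists a constant C > 0 depending only on α, C_ψ, c₂ such that for every λ ∈ (0,1] and every f = Σ_j f_j ψ_j with Σ_j (1 + λ/μ_j) f_j² ≤ R², the function f satisfies ‖f‖_∞ ≤ C R λ^{−1/(4α)}. -/
open MeasureTheory ProbabilityTheory Real Set

noncomputable section

/- Auxiliary lemmas -/

lemma mvt_step (β : ℝ) (hβ : 1 < β) (x : ℝ) (hx : 1 ≤ x) :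
    (β - 1) * (x+1) ^ (-β) ≤ x ^ (1-β) - (x+1) ^ (1-β) := by
  have hx0 : 0 < x := lt_of_lt_of_le one_pos hx
  obtain ⟨c, hc, hceq⟩ := exists_hasDerivAt_eq_slope (fun y => y ^ (1-β))
    (fun y => (1-β) * y ^ (-β)) (by linarith : x < x + 1)
    (by
      intro y hy
      have hy0 : 0 < y := lt_of_lt_of_le hx0 hy.1
      exact (Real.continuousAt_rpow_const y (1-β) (Or.inl hy0.ne')).continuousWithinAt)
    (by
      intro y hy
      have hy0 : 0 < y := lt_trans hx0 hy.1
      have := Real.hasDerivAt_rpow_const (x := y) (p := 1-β) (Or.inl hy0.ne')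
      convert this using 1
      rw [show (1:ℝ)-β-1 = -β by ring])
  have hc0 : 0 < c := lt_trans hx0 hc.1
  have hle : (x+1) ^ (-β) ≤ c ^ (-β) :=
    Real.rpow_le_rpow_of_nonpos hc0 hc.2.le (by linarith)
  have : (1-β) * c ^ (-β) = ((x+1) ^ (1-β) - x ^ (1-β)) / (x + 1 - x) := hceq
  rw [show x + 1 - x = 1 by ring, div_one] at this
  nlinarith [Real.rpow_nonneg (le_of_lt (by linarith : (0:ℝ) < x+1)) (-β)]

lemma tail_bound (β : ℝ) (hβ : 1 < β) (N : ℕ) (hN : 1 ≤ N) :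
    ∑' j : ℕ, (((N:ℝ) + j) + 1) ^ (-β) ≤ (N:ℝ) ^ (1-β) / (β - 1) := by
  have hβ0 : 0 < β - 1 := by linarith
  apply Real.tsum_le_of_sum_range_le (fun n => by positivity)
  intro n
  have key : ∀ j ∈ Finset.range n, (((N:ℝ) + j) + 1) ^ (-β)
      ≤ (β-1)⁻¹ * (((N:ℝ)+j) ^ (1-β) - ((N:ℝ)+(j+1)) ^ (1-β)) := by
    intro j _
    have hx : (1:ℝ) ≤ (N:ℝ) + j := by
      have : (1:ℝ) ≤ (N:ℝ) := by exact_mod_cast hN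
      have : (0:ℝ) ≤ (j:ℝ) := Nat.cast_nonneg j
      linarith
    have h := mvt_step β hβ ((N:ℝ)+j) hx
    have h2 : ((N:ℝ)+j) + 1 = (N:ℝ) + ((j:ℝ)+1) := by ring
    rw [inv_mul_eq_div, le_div_iff₀ hβ0, ← h2]
    linarith
  calc ∑ j ∈ Finset.range n, (((N:ℝ) + j) + 1) ^ (-β)
      ≤ ∑ j ∈ Finset.range n, (β-1)⁻¹ * (((N:ℝ)+j) ^ (1-β) - ((N:ℝ)+(j+1)) ^ (1-β)) :=
        Finset.sum_le_sum key
    _ = (β-1)⁻¹ * ∑ j ∈ Finset.range n, ((fun k : ℕ => ((N:ℝ)+k) ^ (1-β)) j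
          - (fun k : ℕ => ((N:ℝ)+k) ^ (1-β)) (j+1)) := by
        rw [Finset.mul_sum]
        apply Finset.sum_congr rfl
        intro j _
        push_cast
        ring
    _ = (β-1)⁻¹ * (((N:ℝ)+(0:ℕ)) ^ (1-β) - ((N:ℝ)+(n:ℕ)) ^ (1-β)) := by
        rw [Finset.sum_range_sub']
    _ ≤ (N:ℝ) ^ (1-β) / (β - 1) := by
        rw [div_eq_inv_mul]
        have h1 : (0:ℝ) ≤ ((N:ℝ)+(n:ℕ)) ^ (1-β) := by positivity
        have h2 : ((N:ℝ)+(0:ℕ)) ^ (1-β) = (N:ℝ) ^ (1-β) := by norm_num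
        rw [h2]
        have : (0:ℝ) < (β-1)⁻¹ := by positivity
        nlinarith

lemma summable_shift (β : ℝ) (hβ : 1 < β) :
    Summable (fun j : ℕ => ((j:ℝ) + 1) ^ (-β)) := by
  have h := (Real.summable_nat_rpow (p := -β)).mpr (by linarith)
  have := (summable_nat_add_iff 1).mpr h
  refine this.congr fun j => ?_
  push_cast
  ring_nf

lemma min_sum_bound (β c₂ : ℝ) (hβ : 1 < β) (hc₂ : 0 < c₂) (lam : ℝ)
    (hlam : lam ∈ Ioc (0:ℝ) 1) :
    ∑' j : ℕ, min 1 (c₂ * ((j:ℝ)+1) ^ (-β) / lam)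
      ≤ (c₂ ^ (1/β) + 1 + c₂ ^ (1/β) / (β-1)) * lam ^ (-(1/β)) := by
  obtain ⟨hl0, hl1⟩ := hlam
  have hβ0 : (0:ℝ) < β := by linarith
  set x : ℝ := (c₂ / lam) ^ (1/β) with hxdef
  have hx0 : 0 < x := Real.rpow_pos_of_pos (by positivity) _
  set N : ℕ := ⌈x⌉₊ with hNdef
  have hN1 : 1 ≤ N := Nat.one_le_ceil_iff.mpr hx0
  have hNx : x ≤ (N:ℝ) := Nat.le_ceil x
  have hNx1 : (N:ℝ) ≤ x + 1 := (Nat.ceil_lt_add_one hx0.le).le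
  set g : ℕ → ℝ := fun j => min 1 (c₂ * ((j:ℝ)+1) ^ (-β) / lam) with hgdef
  have hg_nonneg : ∀ j, 0 ≤ g j := fun j => le_min one_pos.le (by positivity)
  have hg_le : ∀ j, g j ≤ c₂ / lam * ((j:ℝ)+1) ^ (-β) := by
    intro j
    refine (min_le_right _ _).trans (le_of_eq ?_)
    ring
  have hg_summ : Summable g :=
    Summable.of_nonneg_of_le hg_nonneg hg_le ((summable_shift β hβ).mul_left _)
  -- lam ^ (-(1/β)) ≥ 1
  have hL1 : (1:ℝ) ≤ lam ^ (-(1/β)) :=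
    Real.one_le_rpow_of_pos_of_le_one_of_nonpos hl0 hl1 (by positivity |> neg_nonpos_of_nonneg)
  have hxval : x = c₂ ^ (1/β) * lam ^ (-(1/β)) := by
    rw [hxdef, Real.div_rpow hc₂.le hl0.le, Real.rpow_neg hl0.le, div_eq_mul_inv]
  have hshift : Summable (fun j : ℕ => (((N:ℝ) + j) + 1) ^ (-β)) := by
    have h := (summable_nat_add_iff N).mpr (summable_shift β hβ)
    refine h.congr fun j => ?_
    push_cast
    ring_nf
  -- split
  rw [← Summable.sum_add_tsum_nat_add N hg_summ]
  have h1 : ∑ j ∈ Finset.range N, g j ≤ (c₂ ^ (1/β) + 1) * lam ^ (-(1/β)) := by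
    calc ∑ j ∈ Finset.range N, g j ≤ ∑ j ∈ Finset.range N, 1 :=
          Finset.sum_le_sum fun j _ => min_le_left _ _
      _ = (N:ℝ) := by simp
      _ ≤ x + 1 := hNx1
      _ ≤ (c₂ ^ (1/β) + 1) * lam ^ (-(1/β)) := by
          rw [hxval]; nlinarith [Real.rpow_pos_of_pos hc₂ (1/β)]
  have h2 : ∑' j : ℕ, g (j + N) ≤ c₂ ^ (1/β) / (β-1) * lam ^ (-(1/β)) := by
    have step1 : ∑' j : ℕ, g (j + N) ≤ ∑' j : ℕ, c₂ / lam * (((N:ℝ) + j) + 1) ^ (-β) := by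
      apply Summable.tsum_le_tsum
      · intro j
        refine (hg_le (j + N)).trans (le_of_eq ?_)
        push_cast
        ring_nf
      · exact (summable_nat_add_iff N).mpr hg_summ
      · exact hshift.mul_left _
    rw [tsum_mul_left] at step1
    have step2 := tail_bound β hβ N hN1
    have hc2l : 0 ≤ c₂ / lam := by positivity
    have step3 : ∑' j : ℕ, g (j + N) ≤ c₂ / lam * ((N:ℝ) ^ (1-β) / (β-1)) :=
      step1.trans (by gcongr)
    refine step3.trans ?_
    have hNpow : (N:ℝ) ^ (1-β) ≤ x ^ (1-β) :=
      Real.rpow_le_rpow_of_nonpos hx0 hNx (by linarith)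
    have hcl : (0:ℝ) < c₂ / lam := by positivity
    have hβne : β ≠ 0 := ne_of_gt hβ0
    have hkey : c₂ / lam * (x ^ (1-β) / (β-1)) = c₂ ^ (1/β) / (β-1) * lam ^ (-(1/β)) := by
      have e1 : c₂ / lam * x ^ (1-β) = x := by
        rw [hxdef, ← Real.rpow_mul hcl.le,
          show (1:ℝ)/β*(1-β) = 1/β - 1 by field_simp,
          Real.rpow_sub hcl, Real.rpow_one]
        field_simp
      calc c₂/lam * (x^(1-β)/(β-1)) = (c₂/lam * x^(1-β))/(β-1) := by ring
        _ = x/(β-1) := by rw [e1]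
        _ = _ := by rw [hxval]; ring
    calc c₂ / lam * ((N:ℝ) ^ (1-β) / (β-1)) ≤ c₂ / lam * (x ^ (1-β) / (β-1)) := by
          gcongr
      _ = _ := hkey
  linarith

/-- sup-norm embedding for the equivalent-kernel norm. -/
theorem statement17 (α Cψ c₂ : ℝ) (hα : 1/2 < α) (hCψ : 0 < Cψ) (hc₂ : 0 < c₂) :
    ∃ C > (0:ℝ),
    ∀ ψ : ℕ → ℝ → ℝ, ∀ μs : ℕ → ℝ,
    (∀ j : ℕ, ∀ t ∈ Icc (0:ℝ) 1, |ψ j t| ≤ Cψ) →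
    (∀ j : ℕ, 0 < μs j) →
    (∀ j : ℕ, μs j ≤ c₂ * ((j:ℝ) + 1) ^ (-(2*α))) →
    ∀ lam : ℝ, lam ∈ Ioc (0:ℝ) 1 → ∀ R : ℝ, 0 ≤ R → ∀ fc : ℕ → ℝ,
      Summable (fun j : ℕ => (1 + lam / μs j) * fc j ^ 2) →
      (∑' j : ℕ, (1 + lam / μs j) * fc j ^ 2) ≤ R ^ 2 →
      supNorm01 (seriesFun ψ fc) ≤ C * R * lam ^ (-(1/(4*α))) := by
  have hβ : 1 < 2*α := by linarith
  have hα0 : 0 < α := by linarith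
  set C₁ : ℝ := c₂ ^ (1/(2*α)) + 1 + c₂ ^ (1/(2*α)) / (2*α-1) with hC₁def
  have hc₂p : 0 < c₂ ^ (1/(2*α)) := Real.rpow_pos_of_pos hc₂ _
  have hC₁ : 0 < C₁ := by
    have h' : 0 < c₂ ^ (1/(2*α)) / (2*α-1) := div_pos hc₂p (by linarith)
    rw [hC₁def]
    linarith
  have hsC₁ : 0 < Real.sqrt C₁ := Real.sqrt_pos.mpr hC₁
  clear_value C₁
  refine ⟨Cψ * Real.sqrt C₁, mul_pos hCψ hsC₁, ?_⟩
  intro ψ μs hψ hμpos hμle lam hlam R hR fc hsum hR2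
  obtain ⟨hl0, hl1⟩ := hlam
  haveI hne : Nonempty (Icc (0:ℝ) 1) := ⟨⟨0, le_refl 0, zero_le_one⟩⟩
  set L := lam ^ (-(1/(4*α))) with hLdef
  have hL0 : 0 < L := Real.rpow_pos_of_pos hl0 _
  have hexp : lam ^ (-(1/(2*α))) = L * L := by
    rw [hLdef, ← Real.rpow_add hl0]
    congr 1
    field_simp
    ring
  clear_value L
  have hwpos : ∀ j, 0 < 1 + lam / μs j := by
    intro j
    have h := div_pos hl0 (hμpos j)
    linarith
  have hwinv_le : ∀ j : ℕ,
      (1 + lam / μs j)⁻¹ ≤ min 1 (c₂ * ((j:ℝ)+1) ^ (-(2*α)) / lam) := by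
    intro j
    have hμ := hμpos j
    refine le_min (inv_le_one_of_one_le₀ (by nlinarith [div_pos hl0 hμ])) ?_
    have h1 : (1 + lam / μs j)⁻¹ = μs j / (μs j + lam) := by
      rw [eq_div_iff (by positivity)]
      field_simp
    rw [h1]
    calc μs j / (μs j + lam) ≤ μs j / lam := by
          gcongr
          linarith
      _ ≤ c₂ * ((j:ℝ)+1) ^ (-(2*α)) / lam := by
          gcongr
          exact hμle j
  have hmin_nonneg : ∀ j : ℕ, (0:ℝ) ≤ min 1 (c₂ * ((j:ℝ)+1) ^ (-(2*α)) / lam) :=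
    fun j => le_min zero_le_one (by positivity)
  have hmin_summ : Summable (fun j : ℕ => min 1 (c₂ * ((j:ℝ)+1) ^ (-(2*α)) / lam)) := by
    refine Summable.of_nonneg_of_le hmin_nonneg (fun j => ?_)
      ((summable_shift (2*α) hβ).mul_left (c₂ / lam))
    refine (min_le_right _ _).trans (le_of_eq ?_)
    ring
  have hwinv_summ : Summable (fun j : ℕ => (1 + lam / μs j)⁻¹) :=
    Summable.of_nonneg_of_le (fun j => (inv_nonneg).mpr (hwpos j).le) hwinv_le hmin_summ
  have hS : ∑' j : ℕ, (1 + lam / μs j)⁻¹ ≤ C₁ * (L * L) := by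
    calc ∑' j : ℕ, (1 + lam / μs j)⁻¹
        ≤ ∑' j : ℕ, min 1 (c₂ * ((j:ℝ)+1) ^ (-(2*α)) / lam) :=
          Summable.tsum_le_tsum hwinv_le hwinv_summ hmin_summ
      _ ≤ C₁ * lam ^ (-(1/(2*α))) := by
          rw [hC₁def]
          exact min_sum_bound (2*α) c₂ hβ hc₂ lam ⟨hl0, hl1⟩
      _ = C₁ * (L * L) := by rw [hexp]
  by_cases hR0 : R = 0
  · subst hR0
    have h0 : ∑' j : ℕ, (1 + lam / μs j) * fc j ^ 2 = 0 := by
      refine le_antisymm (by simpa using hR2) (tsum_nonneg fun j => ?_)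
      exact mul_nonneg (hwpos j).le (sq_nonneg _)
    have hzero : ∀ j, fc j = 0 := by
      intro j
      have hj : (1 + lam / μs j) * fc j ^ 2 ≤ 0 := by
        rw [← h0]
        exact Summable.le_tsum hsum j fun i _ => mul_nonneg (hwpos i).le (sq_nonneg _)
      have hw := hwpos j
      have : fc j ^ 2 = 0 := by
        by_contra hne'
        have : 0 < fc j ^ 2 := lt_of_le_of_ne (sq_nonneg _) (Ne.symm hne')
        nlinarith
      exact pow_eq_zero_iff (by norm_num) |>.mp this
    unfold supNorm01
    apply ciSup_le
    rintro ⟨x, hx⟩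
    have : seriesFun ψ fc x = 0 := by
      unfold seriesFun
      simp [hzero]
    rw [this, abs_zero, mul_zero, zero_mul]
  · have hRpos : 0 < R := lt_of_le_of_ne hR (Ne.symm hR0)
    set s : ℝ := Real.sqrt C₁ with hsdef
    have hs0 : 0 < s := hsC₁
    have hss : s * s = C₁ := Real.mul_self_sqrt hC₁.le
    clear_value s
    set t : ℝ := s * L / R with htdef
    have ht0 : 0 < t := by rw [htdef]; positivity
    clear_value t
    have ham : ∀ j : ℕ, |fc j| ≤
        (t * ((1 + lam / μs j) * fc j ^ 2) + t⁻¹ * (1 + lam / μs j)⁻¹) / 2 := by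
      intro j
      have hw0 : 0 < 1 + lam / μs j := hwpos j
      have h1 : 0 < t * (1 + lam / μs j) := mul_pos ht0 hw0
      have hu : (t * (1 + lam / μs j)) * (t * (1 + lam / μs j))⁻¹ = 1 :=
        mul_inv_cancel₀ h1.ne'
      have hsq := sq_nonneg (t * (1 + lam / μs j) * |fc j| - 1)
      have habs : |fc j| ^ 2 = fc j ^ 2 := sq_abs _
      have e : t⁻¹ * (1 + lam / μs j)⁻¹ = (t * (1 + lam / μs j))⁻¹ := (mul_inv _ _).symm
      rw [e, le_div_iff₀ (by norm_num : (0:ℝ) < 2)]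
      have h3 : (t * (1 + lam / μs j))⁻¹ * (t * (1 + lam / μs j)) ^ 2
          = t * (1 + lam / μs j) := by
        field_simp
      have h4 : (0:ℝ) ≤ (t * (1 + lam / μs j))⁻¹ := inv_nonneg.mpr h1.le
      nlinarith [mul_nonneg h4 hsq]
    have hsummul : Summable (fun j : ℕ =>
        (t * ((1 + lam / μs j) * fc j ^ 2) + t⁻¹ * (1 + lam / μs j)⁻¹) / 2) :=
      ((hsum.mul_left t).add (hwinv_summ.mul_left t⁻¹)).div_const 2
    have habs_summ : Summable (fun j : ℕ => |fc j|) :=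
      Summable.of_nonneg_of_le (fun j => abs_nonneg _) ham hsummul
    have hT : ∑' j : ℕ, |fc j| ≤ s * R * L := by
      have e1 : t * R ^ 2 = s * R * L := by
        rw [htdef]
        field_simp
      have e2 : t⁻¹ * (C₁ * (L * L)) = s * R * L := by
        rw [htdef, ← hss]
        field_simp
      calc ∑' j : ℕ, |fc j|
          ≤ ∑' j : ℕ, (t * ((1 + lam / μs j) * fc j ^ 2) + t⁻¹ * (1 + lam / μs j)⁻¹) / 2 :=
            Summable.tsum_le_tsum ham habs_summ hsummul
        _ = (t * ∑' j : ℕ, (1 + lam / μs j) * fc j ^ 2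
              + t⁻¹ * ∑' j : ℕ, (1 + lam / μs j)⁻¹) / 2 := by
            rw [tsum_div_const, Summable.tsum_add (hsum.mul_left t) (hwinv_summ.mul_left t⁻¹),
              tsum_mul_left, tsum_mul_left]
        _ ≤ (t * R ^ 2 + t⁻¹ * (C₁ * (L * L))) / 2 := by gcongr
        _ = s * R * L := by rw [e1, e2]; ring
    unfold supNorm01
    apply ciSup_le
    rintro ⟨x, hx⟩
    have hterm : ∀ j : ℕ, |fc j| * |ψ j x| ≤ Cψ * |fc j| := by
      intro j
      rw [mul_comm]
      exact mul_le_mul_of_nonneg_right (hψ j x hx) (abs_nonneg _)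
    have hsx : Summable (fun j : ℕ => |fc j| * |ψ j x|) :=
      Summable.of_nonneg_of_le (fun j => mul_nonneg (abs_nonneg _) (abs_nonneg _))
        hterm (habs_summ.mul_left Cψ)
    calc |seriesFun ψ fc x|
        ≤ ∑' j : ℕ, |fc j| * |ψ j x| := by
          unfold seriesFun
          simpa [Real.norm_eq_abs] using
            norm_tsum_le_tsum_norm (f := fun j : ℕ => fc j * ψ j x)
              (by simpa [Real.norm_eq_abs, abs_mul] using hsx)
      _ ≤ ∑' j : ℕ, Cψ * |fc j| := Summable.tsum_le_tsum hterm hsx (habs_summ.mul_left Cψ)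
      _ = Cψ * ∑' j : ℕ, |fc j| := tsum_mul_left
      _ ≤ Cψ * (s * R * L) := by gcongr
      _ = Cψ * s * R * L := by ring
end
end
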